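/- arXiv:2410.02014 — 4 statements merged into one kernel-verified Lean document; each statement's English description precedes it below -/
import Mathlib

section
/- Let C be a small category. A presheaf F : Cᵒᵖ → Type is tiny (i.e. the corepresentable functor Hom(F, −) : PSh(C) → Type preserves all small colimits) if and only if F is a retract of a representable presheaf. -/
open CategoryTheory CategoryTheory.Limits

universe u

section Aux

variable {D E : Type*} [Category D] [Category E]

/-- If `G` is a retract of `H` (as functors) and `H` preserves colimits, so does `G`. -/
lemma preservesColimit_of_retract {G H : D ⥤ E} (α : G ⟶ H) (β : H ⟶ G) (hβ : α ≫ β = 𝟙 G)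
    {J : Type*} [Category J] (K : J ⥤ D) [PreservesColimit K H] : PreservesColimit K G where
  preserves {s} hs := by
    obtain ⟨hH⟩ := PreservesColimit.preserves (F := H) hs
    have hαβ : ∀ X, α.app X ≫ β.app X = 𝟙 (G.obj X) := fun X => by
      rw [← NatTrans.comp_app, hβ, NatTrans.id_app]
    refine ⟨?_⟩
    let mk : Cocone (K ⋙ G) → Cocone (K ⋙ H) := fun t =>
      ⟨t.pt, { app := fun j => β.app (K.obj j) ≫ t.ι.app j
               naturality := fun j j' f => by
                 have h1 := β.naturality (K.map f)
                 have h2 := t.w f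
                 dsimp at h1 h2 ⊢
                 rw [Category.comp_id, reassoc_of% h1, h2] }⟩
    refine ⟨fun t => α.app s.pt ≫ hH.desc (mk t), ?_, ?_⟩
    · intro t j
      have hα := α.naturality (s.ι.app j)
      have hf := hH.fac (mk t) j
      dsimp [mk] at hα hf ⊢
      rw [reassoc_of% hα, hf, ← Category.assoc, hαβ, Category.id_comp]
    · intro t m hm
      have h1 : β.app s.pt ≫ m = hH.desc (mk t) := by
        refine hH.uniq (mk t) _ fun j => ?_
        have hβn := β.naturality (s.ι.app j)
        have hmj := hm j
        dsimp [mk] at hβn hmj ⊢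
        rw [reassoc_of% hβn, hmj]
      rw [← h1, ← Category.assoc, hαβ]
      exact (Category.id_comp m).symm

end Aux

variable {C : Type u} [SmallCategory C]

/-- `Hom(yoneda.obj c, −)` is isomorphic to evaluation at `c`. -/
noncomputable def coyonedaYonedaIsoEval (c : C) :
    coyoneda.obj (Opposite.op (yoneda.obj c)) ≅ (evaluation Cᵒᵖ (Type u)).obj (Opposite.op c) :=
  NatIso.ofComponents (fun F => (yonedaEquiv (X := c) (F := F)).toIso)
    (fun {F G} f => by
      ext g
      exact yonedaEquiv_comp g f)

noncomputable instance coyonedaYonedaPreserves (c : C) :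
    PreservesColimitsOfSize.{u, u} (coyoneda.obj (Opposite.op (yoneda.obj c))) :=
  preservesColimits_of_natIso (coyonedaYonedaIsoEval c).symm

/-- A presheaf `F : Cᵒᵖ ⥤ Type` on a small category `C` is tiny, i.e. the corepresentable
functor `Hom(F, −) : PSh(C) ⥤ Type` preserves all small colimits, if and only if `F` is a
retract of a representable presheaf. -/
theorem tiny_iff_retract_of_representable {C : Type u} [SmallCategory C] (F : Cᵒᵖ ⥤ Type u) :
    Nonempty (PreservesColimitsOfSize.{u, u} (coyoneda.obj (Opposite.op F))) ↔
      ∃ (c : C) (i : F ⟶ yoneda.obj c) (r : yoneda.obj c ⟶ F), i ≫ r = 𝟙 F := by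
  constructor
  · rintro ⟨hP⟩
    -- `F` is a colimit of representables; apply `Hom(F, −)` and use joint surjectivity.
    have hc : IsColimit ((coyoneda.obj (Opposite.op F)).mapCocone
        (Presheaf.coconeOfRepresentable F)) :=
      (isColimitOfPreserves _ (Presheaf.colimitOfRepresentable F))
    obtain ⟨j, i, hi⟩ := Types.jointly_surjective _ hc (𝟙 F)
    let c : C := (CategoryOfElements.π F).leftOp.obj j
    let i' : F ⟶ uliftYoneda.{u, u, u}.obj c := i
    let r' : uliftYoneda.{u, u, u}.obj c ⟶ F := (Presheaf.coconeOfRepresentable F).ι.app j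
    have hi' : i' ≫ r' = 𝟙 F := hi
    exact ⟨c, i' ≫ (uliftYonedaIsoYoneda.{u, u, u} (C := C)).hom.app c,
      (uliftYonedaIsoYoneda.{u, u, u} (C := C)).inv.app c ≫ r',
      by rw [Category.assoc, Iso.hom_inv_id_app_assoc]; exact hi'⟩
  · rintro ⟨c, i, r, hir⟩
    refine ⟨⟨fun {J} _ => ⟨fun {K} => ?_⟩⟩⟩
    exact preservesColimit_of_retract (coyoneda.map r.op) (coyoneda.map i.op)
      (by rw [← coyoneda.map_comp, ← op_comp, hir]; rfl) K
end

section
/- Let L : C → D be a functor exhibiting D as the localization of a category C at a class W of morphisms of C. Then L is a final (cofinal) functor: for every functor G : D → E, a cocone on G is colimiting if and only if the induced cocone on G ∘ L is colimiting; equivalently, restriction along L preserves and reflects colimits. -/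
open CategoryTheory

universe v₁ v₂ u₁ u₂

namespace FinalOfIsLocalizationAux

open CategoryTheory.Localization.Construction

variable {C : Type u₁} [Category.{v₁} C] (W : MorphismProperty C)

/-- Send a morphism `g : d ⟶ X` in `W.Localization` to an object of the
structured arrow category over `W.Q`, using that every object of the
localization is of the form `W.Q.obj c`. -/
noncomputable def toSA {d X : W.Localization} (g : d ⟶ X) : StructuredArrow d W.Q :=
  StructuredArrow.mk (Y := (objEquiv W).symm X)
    (g ≫ eqToHom ((objEquiv W).right_inv X).symm)

lemma zigzag_toSA (d : W.Localization) {X Y : W.Localization} (f : X ⟶ Y)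
    (g : d ⟶ X) : Zigzag (toSA W g) (toSA W (g ≫ f)) := by
  let P : MorphismProperty W.Localization := fun X Y f =>
    ∀ (g : d ⟶ X), Zigzag (toSA W g) (toSA W (g ≫ f))
  have hP : P = ⊤ := by
    have : P.IsStableUnderComposition := by
      constructor
      intro X Y Z f₁ f₂ h₁ h₂ g
      exact (h₁ g).trans (by simpa using h₂ (g ≫ f₁))
    refine morphismProperty_eq_top P ?_ ?_
    · intro X Y f g
      exact Zigzag.of_hom (StructuredArrow.homMk f (by simp [toSA]; rfl))
    · intro X Y w hw g
      refine Zigzag.of_inv (StructuredArrow.homMk w ?_)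
      have hww : wInv w hw ≫ W.Q.map w = 𝟙 _ := (wIso w hw).inv_hom_id
      simp only [toSA, StructuredArrow.mk_right, Functor.const_obj_obj,
        StructuredArrow.mk_hom_eq_self, Category.assoc]
      erw [eqToHom_refl, eqToHom_refl, Category.id_comp, Category.comp_id, hww,
        Category.comp_id]
  have hPf : P f := by rw [hP]; trivial
  exact hPf g

instance : W.Q.Final := by
  constructor
  intro d
  have hne : Nonempty (StructuredArrow d W.Q) :=
    ⟨toSA W (𝟙 d)⟩
  refine zigzag_isConnected (fun j₁ j₂ => ?_)
  have key : ∀ (j : StructuredArrow d W.Q), Zigzag (toSA W (𝟙 d)) j := by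
    intro j
    obtain ⟨⟨⟩, r, f⟩ := j
    have h := zigzag_toSA W d f (𝟙 d)
    rw [Category.id_comp] at h
    refine h.trans (Zigzag.of_hom (StructuredArrow.homMk (𝟙 r) ?_))
    show (f ≫ 𝟙 _) ≫ W.Q.map (𝟙 r) = f
    simp
  exact (key j₁).symm.trans (key j₂)

end FinalOfIsLocalizationAux

/-- A localization functor is final (cofinal): if `L : C ⥤ D` exhibits `D` as the
localization of `C` at a class `W` of morphisms of `C`, then `L` is a final functor,
so that restriction along `L` preserves and reflects colimits. -/
theorem final_of_isLocalization {C : Type u₁} {D : Type u₂} [Category.{v₁} C] [Category.{v₂} D]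
    (L : C ⥤ D) (W : MorphismProperty C) [L.IsLocalization W] : L.Final := by
  have : W.Q.Final := inferInstance
  have : (W.Q ⋙ (Localization.uniq W.Q L W).functor).Final :=
    Functor.final_comp_equivalence _ _
  exact Functor.final_of_natIso (Localization.compUniqFunctor W.Q L W)
end

section
/- (Street's characterization of cocartesian fibrations) A functor p : X → C is a cocartesian fibration if and only if the canonical functor η : X → Comma(p, 𝟭_C), x ↦ (x, 𝟙_{p(x)}), admits a left adjoint ℓ over C, i.e. a left adjoint ℓ : Comma(p, 𝟭_C) → X such that p ∘ ℓ equals the projection Comma(p, 𝟭_C) → C and the unit and counit of the adjunction project to identities in C. -/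
open CategoryTheory

universe v u₁ u₂

variable {E : Type*} {B : Type*} [Category E] [Category B]

/-- A morphism `φ : x ⟶ y` of `E` is `p`-cocartesian (for `p : E ⥤ B`) if every morphism
`ψ : x ⟶ z` whose image factors through `p.map φ` factors uniquely through `φ`. -/
def IsCocartesianHom (p : E ⥤ B) {x y : E} (φ : x ⟶ y) : Prop :=
  ∀ ⦃z : E⦄ (ψ : x ⟶ z) (g : p.obj y ⟶ p.obj z), p.map φ ≫ g = p.map ψ →
    ∃! χ : y ⟶ z, p.map χ = g ∧ φ ≫ χ = ψ

/-- A functor `p : E ⥤ B` is a cocartesian fibration if every morphism of `B` admits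
`p`-cocartesian lifts with any prescribed source. -/
def IsCocartesianFibration (p : E ⥤ B) : Prop :=
  ∀ (x : E) ⦃b : B⦄ (f : p.obj x ⟶ b), ∃ (y : E) (φ : x ⟶ y) (e : p.obj y = b),
    p.map φ ≫ eqToHom e = f ∧ IsCocartesianHom p φ

/-- For a functor `p : X ⥤ C`, the canonical functor `η : X ⥤ Comma(p, 𝟭 C)` into the
free cocartesian fibration on `p`, sending `x` to `(x, 𝟙_{p(x)})`. -/
def etaFunctor {X : Type u₁} {C : Type u₂} [Category.{v} X] [Category.{v} C]
    (p : X ⥤ C) : X ⥤ Comma p (𝟭 C) where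
  obj x := { left := x, right := p.obj x, hom := 𝟙 (p.obj x) }
  map {x y} f := { left := f, right := p.map f }

section StreetAux

attribute [-instance] catToReflQuiver

/-- The chosen lift of a cocartesian factorization. -/
noncomputable def cocartLift (p : E ⥤ B) {x y z : E} {φ : x ⟶ y}
    (h : IsCocartesianHom p φ) (ψ : x ⟶ z) (g : p.obj y ⟶ p.obj z)
    (w : p.map φ ≫ g = p.map ψ) : y ⟶ z :=
  (h ψ g w).exists.choose

lemma cocartLift_map (p : E ⥤ B) {x y z : E} {φ : x ⟶ y}
    (h : IsCocartesianHom p φ) (ψ : x ⟶ z) (g : p.obj y ⟶ p.obj z)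
    (w : p.map φ ≫ g = p.map ψ) : p.map (cocartLift p h ψ g w) = g :=
  (h ψ g w).exists.choose_spec.1

lemma cocartLift_fac (p : E ⥤ B) {x y z : E} {φ : x ⟶ y}
    (h : IsCocartesianHom p φ) (ψ : x ⟶ z) (g : p.obj y ⟶ p.obj z)
    (w : p.map φ ≫ g = p.map ψ) : φ ≫ cocartLift p h ψ g w = ψ :=
  (h ψ g w).exists.choose_spec.2

lemma cocart_hom_ext (p : E ⥤ B) {x y z : E} {φ : x ⟶ y}
    (h : IsCocartesianHom p φ) {χ χ' : y ⟶ z}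
    (hm : p.map χ = p.map χ') (hf : φ ≫ χ = φ ≫ χ') : χ = χ' := by
  obtain ⟨c, -, hu⟩ := h (φ ≫ χ') (p.map χ') (by rw [p.map_comp])
  rw [hu χ ⟨hm, hf⟩, hu χ' ⟨rfl, rfl⟩]

variable {X : Type u₁} {C : Type u₂} [Category.{v} X] [Category.{v} C] (p : X ⥤ C)
  (hp : IsCocartesianFibration p)

/-- Chosen codomain of a cocartesian lift of `Z.hom`. -/
noncomputable def streetObj (Z : Comma p (𝟭 C)) : X :=
  (hp Z.left Z.hom).choose

/-- Chosen cocartesian lift of `Z.hom`. -/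
noncomputable def streetHom (Z : Comma p (𝟭 C)) : Z.left ⟶ streetObj p hp Z :=
  (hp Z.left Z.hom).choose_spec.choose

lemma streetEq (Z : Comma p (𝟭 C)) : p.obj (streetObj p hp Z) = Z.right :=
  (hp Z.left Z.hom).choose_spec.choose_spec.choose

lemma street_w (Z : Comma p (𝟭 C)) :
    p.map (streetHom p hp Z) ≫ eqToHom (streetEq p hp Z) = Z.hom :=
  (hp Z.left Z.hom).choose_spec.choose_spec.choose_spec.1

lemma street_cocart (Z : Comma p (𝟭 C)) : IsCocartesianHom p (streetHom p hp Z) :=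
  (hp Z.left Z.hom).choose_spec.choose_spec.choose_spec.2

lemma street_w' (Z : Comma p (𝟭 C)) :
    p.map (streetHom p hp Z) = Z.hom ≫ eqToHom (streetEq p hp Z).symm := by
  rw [← street_w p hp Z]; simp

lemma street_map_w {Z Z' : Comma p (𝟭 C)} (m : Z ⟶ Z') :
    p.map (streetHom p hp Z) ≫
      (eqToHom (streetEq p hp Z) ≫ m.right ≫ eqToHom (streetEq p hp Z').symm) =
      p.map (m.left ≫ streetHom p hp Z') := by
  rw [p.map_comp, street_w' p hp Z, street_w' p hp Z']
  have := m.w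
  simp only [Functor.id_obj, Functor.id_map] at this
  simp [reassoc_of% this]

/-- The action on morphisms of the left adjoint. -/
noncomputable def streetMap {Z Z' : Comma p (𝟭 C)} (m : Z ⟶ Z') :
    streetObj p hp Z ⟶ streetObj p hp Z' :=
  cocartLift p (street_cocart p hp Z) (m.left ≫ streetHom p hp Z')
    (eqToHom (streetEq p hp Z) ≫ m.right ≫ eqToHom (streetEq p hp Z').symm)
    (street_map_w p hp m)

lemma streetMap_map {Z Z' : Comma p (𝟭 C)} (m : Z ⟶ Z') :
    p.map (streetMap p hp m) =
      eqToHom (streetEq p hp Z) ≫ m.right ≫ eqToHom (streetEq p hp Z').symm :=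
  cocartLift_map p _ _ _ _

lemma streetMap_fac {Z Z' : Comma p (𝟭 C)} (m : Z ⟶ Z') :
    streetHom p hp Z ≫ streetMap p hp m = m.left ≫ streetHom p hp Z' :=
  cocartLift_fac p _ _ _ _

/-- The left adjoint to `etaFunctor p`, given a cocartesian fibration. -/
noncomputable def streetFunctor : Comma p (𝟭 C) ⥤ X where
  obj := streetObj p hp
  map {Z Z'} m := streetMap p hp m
  map_id Z := by
    refine (cocart_hom_ext p (street_cocart p hp Z) ?_ ?_).symm
    · rw [streetMap_map]; simp
    · rw [streetMap_fac]; simp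
  map_comp {Z Z' Z''} m m' := by
    refine (cocart_hom_ext p (street_cocart p hp Z) ?_ ?_).symm
    · rw [p.map_comp, streetMap_map, streetMap_map, streetMap_map]; simp
    · rw [streetMap_fac, reassoc_of% (streetMap_fac p hp m), streetMap_fac]; simp

@[simp] lemma streetFunctor_map {Z Z' : Comma p (𝟭 C)} (m : Z ⟶ Z') :
    (streetFunctor p hp).map m = streetMap p hp m := rfl

@[simp] lemma streetFunctor_obj (Z : Comma p (𝟭 C)) :
    (streetFunctor p hp).obj Z = streetObj p hp Z := rfl

/-- The unit of the adjunction `streetFunctor ⊣ etaFunctor`. -/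
noncomputable def streetUnit :
    𝟭 (Comma p (𝟭 C)) ⟶ streetFunctor p hp ⋙ etaFunctor p where
  app Z :=
    { left := streetHom p hp Z
      right := eqToHom (streetEq p hp Z).symm
      w := by simp [street_w' p hp Z, etaFunctor] }
  naturality Z Z' m := by
    ext
    · simpa [etaFunctor] using (streetMap_fac p hp m).symm
    · have := m.w
      simp only [Functor.id_obj, Functor.id_map] at this
      simp [etaFunctor, streetMap_map p hp m]

lemma street_counit_w (x : X) :
    p.map (streetHom p hp ((etaFunctor p).obj x)) ≫
      eqToHom (streetEq p hp ((etaFunctor p).obj x)) = p.map (𝟙 x) := by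
  rw [street_w]; simp [etaFunctor]

/-- The component of the counit of the adjunction `streetFunctor ⊣ etaFunctor`. -/
noncomputable def streetCounitApp (x : X) :
    streetObj p hp ((etaFunctor p).obj x) ⟶ x :=
  cocartLift p (street_cocart p hp ((etaFunctor p).obj x)) (𝟙 x)
    (eqToHom (streetEq p hp ((etaFunctor p).obj x))) (street_counit_w p hp x)

lemma streetCounitApp_map (x : X) :
    p.map (streetCounitApp p hp x) = eqToHom (streetEq p hp ((etaFunctor p).obj x)) :=
  cocartLift_map p _ _ _ _

lemma streetCounitApp_fac (x : X) :
    streetHom p hp ((etaFunctor p).obj x) ≫ streetCounitApp p hp x = 𝟙 x :=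
  cocartLift_fac p _ _ _ _

/-- The counit of the adjunction `streetFunctor ⊣ etaFunctor`. -/
noncomputable def streetCounit : etaFunctor p ⋙ streetFunctor p hp ⟶ 𝟭 X where
  app x := streetCounitApp p hp x
  naturality x x' f := by
    dsimp only [Functor.comp_obj, Functor.comp_map, Functor.id_obj, Functor.id_map,
      streetFunctor_map, streetFunctor_obj]
    refine cocart_hom_ext p (street_cocart p hp ((etaFunctor p).obj x)) ?_ ?_
    · rw [p.map_comp, p.map_comp, streetMap_map, streetCounitApp_map, streetCounitApp_map]
      simp [etaFunctor]
      erw [eqToHom_trans, eqToHom_refl, Category.comp_id]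
    · rw [reassoc_of% (streetMap_fac p hp ((etaFunctor p).map f)),
        streetCounitApp_fac, ← Category.assoc, streetCounitApp_fac]
      simp [etaFunctor]

/-- The adjunction `streetFunctor ⊣ etaFunctor`. -/
noncomputable def streetAdjunction : streetFunctor p hp ⊣ etaFunctor p where
  unit := streetUnit p hp
  counit := streetCounit p hp
  left_triangle_components Z := by
    refine cocart_hom_ext p (street_cocart p hp Z) ?_ ?_
    · show p.map (streetMap p hp ((streetUnit p hp).app Z) ≫ streetCounitApp p hp _) =
        p.map (𝟙 _)
      rw [p.map_comp, streetMap_map, streetCounitApp_map]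
      have hr : ((streetUnit p hp).app Z).right = eqToHom (streetEq p hp Z).symm := rfl
      rw [hr]; simp
      erw [eqToHom_trans, eqToHom_trans, eqToHom_trans]
      rfl
    · show streetHom p hp Z ≫ streetMap p hp ((streetUnit p hp).app Z) ≫
        streetCounitApp p hp _ = streetHom p hp Z ≫ 𝟙 _
      rw [reassoc_of% (streetMap_fac p hp ((streetUnit p hp).app Z))]
      have hl : ((streetUnit p hp).app Z).left = streetHom p hp Z := rfl
      rw [streetCounitApp_fac, hl]
      exact (Category.comp_id _).trans (Category.comp_id _).symm
  right_triangle_components x := by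
    ext
    · simpa [etaFunctor, streetUnit, streetCounit] using streetCounitApp_fac p hp x
    · simp [etaFunctor, streetUnit, streetCounit, streetCounitApp_map]
      erw [streetCounitApp_map, eqToHom_trans]
      rfl

lemma streetFunctor_comp_eq : streetFunctor p hp ⋙ p = Comma.snd p (𝟭 C) := by
  refine CategoryTheory.Functor.ext (fun Z => streetEq p hp Z) (fun Z Z' m => ?_)
  simp [streetMap_map p hp m]

end StreetAux

/-- Street's characterization of cocartesian fibrations: a functor `p : X ⥤ C` is a
cocartesian fibration if and only if the canonical functor `η : X ⥤ Comma(p, 𝟭 C)`,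
`x ↦ (x, 𝟙_{p(x)})`, admits a left adjoint `ℓ` over `C`, i.e. a left adjoint such that
`ℓ ⋙ p` equals the projection `Comma(p, 𝟭 C) ⥤ C` and the unit and counit of the
adjunction project to identities in `C`. -/
theorem isCocartesianFibration_iff_eta_has_left_adjoint_over_base
    {X : Type u₁} {C : Type u₂} [Category.{v} X] [Category.{v} C] (p : X ⥤ C) :
    IsCocartesianFibration p ↔
      ∃ (ℓ : Comma p (𝟭 C) ⥤ X) (adj : ℓ ⊣ etaFunctor p)
        (hc : ℓ ⋙ p = Comma.snd p (𝟭 C)),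
        (∀ Z : Comma p (𝟭 C), (Comma.snd p (𝟭 C)).map (adj.unit.app Z) =
          eqToHom (Functor.congr_obj hc Z).symm) ∧
        (∀ x : X, p.map (adj.counit.app x) =
          eqToHom (Functor.congr_obj hc ((etaFunctor p).obj x))) := by
  constructor
  · intro hp
    refine ⟨streetFunctor p hp, streetAdjunction p hp, streetFunctor_comp_eq p hp,
      fun Z => ?_, fun x => ?_⟩
    · show ((streetUnit p hp).app Z).right = _
      simp [streetUnit]
      rfl
    · show p.map (streetCounitApp p hp x) = _
      rw [streetCounitApp_map]
      rfl
  · rintro ⟨ℓ, adj, hc, hu, hcn⟩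
    intro x b u
    set Z : Comma p (𝟭 C) := { left := x, right := b, hom := u } with hZ
    have hobj : p.obj (ℓ.obj Z) = b := Functor.congr_obj hc Z
    have hunit_right : (adj.unit.app Z).right = eqToHom hobj.symm := hu Z
    have hunit_w := (adj.unit.app Z).w
    simp only [Functor.id_obj, Functor.id_map, Functor.comp_obj] at hunit_w
    have hφ : p.map ((adj.unit.app Z).left : x ⟶ ℓ.obj Z) = u ≫ eqToHom hobj.symm := by
      rw [hunit_right] at hunit_w
      simpa [etaFunctor] using hunit_w
    refine ⟨ℓ.obj Z, (adj.unit.app Z).left, hobj, ?_, ?_⟩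
    · erw [hφ]; simp
    · intro z ψ g hg
      have key : ∀ χ : ℓ.obj Z ⟶ z, adj.homEquiv Z z χ =
          ({ left := (adj.unit.app Z).left ≫ χ,
             right := eqToHom hobj.symm ≫ p.map χ,
             w := by simp [etaFunctor, hφ]; erw [hφ]; simp; rfl } : Z ⟶ (etaFunctor p).obj z) := by
        intro χ
        rw [Adjunction.homEquiv_unit]
        ext
        · simp [etaFunctor]
        · simp [etaFunctor, hunit_right]
      have hw : p.map ψ ≫ ((etaFunctor p).obj z).hom =
          Z.hom ≫ (𝟭 C).map (eqToHom hobj.symm ≫ g) := by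
        have : p.map ψ = u ≫ eqToHom hobj.symm ≫ g := by
          erw [← hg, hφ]; simp
        simpa [etaFunctor] using this
      set m0 : Z ⟶ (etaFunctor p).obj z :=
        { left := ψ, right := eqToHom hobj.symm ≫ g, w := hw } with hm0
      refine ⟨(adj.homEquiv Z z).symm m0, ⟨?_, ?_⟩, ?_⟩
      · have hkey := key ((adj.homEquiv Z z).symm m0)
        rw [Equiv.apply_symm_apply] at hkey
        have hr := congrArg CommaMorphism.right hkey
        rw [hm0] at hr
        simp only at hr
        have := hr.symm
        exact (cancel_epi _).1 this
      · have hkey := key ((adj.homEquiv Z z).symm m0)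
        rw [Equiv.apply_symm_apply] at hkey
        have hl := congrArg CommaMorphism.left hkey
        rw [hm0] at hl
        exact hl.symm
      · intro χ ⟨h1, h2⟩
        apply (adj.homEquiv Z z).injective
        rw [Equiv.apply_symm_apply, key χ, hm0]
        ext
        · exact h2
        · simp [h1]
end

section
/- Let C be a locally presentable category and let D ⊆ C be a reflective full subcategory such that the inclusion functor D → C preserves κ-filtered colimits for some regular cardinal κ. Then D is locally presentable. -/
open CategoryTheory CategoryTheory.Limits

universe v u u'

/-- A category `A` is `κ`-small if its sets of objects and of morphisms have
cardinality `< κ`. -/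
def IsCardinalSmallCat (A : Type v) [SmallCategory A] (κ : Cardinal.{v}) : Prop :=
  Cardinal.mk A < κ ∧ Cardinal.mk (Σ (X : A) (Y : A), X ⟶ Y) < κ

/-- A category `J` is `κ`-filtered if every diagram indexed by a `κ`-small category
admits a cocone. -/
def IsCardinalFilteredCat (J : Type v) [SmallCategory J] (κ : Cardinal.{v}) : Prop :=
  ∀ (A : Type v) [SmallCategory A], IsCardinalSmallCat A κ →
    ∀ D : A ⥤ J, Nonempty (Cocone D)

/-- An object `c` of `C` is `κ`-presentable (`κ`-compact) if the functor
`Hom_C(c, −) : C ⥤ Type` preserves colimits of `κ`-filtered diagrams. -/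
def IsCardinalPresentableObj {C : Type u} [Category.{v} C] (c : C) (κ : Cardinal.{v}) :
    Prop :=
  ∀ (J : Type v) [SmallCategory J], IsCardinalFilteredCat J κ →
    ∀ (D : J ⥤ C) (cc : Cocone D), Nonempty (IsColimit cc) →
      Nonempty (IsColimit ((coyoneda.obj (Opposite.op c)).mapCocone cc))

/-- A category `C` is locally presentable if it is cocomplete and accessible: there is a
regular cardinal `κ` and a set (small family) of `κ`-presentable objects such that every
object of `C` is a `κ`-filtered colimit of objects of the family. -/
def IsLocallyPresentableCat (C : Type u) [Category.{v} C] : Prop :=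
  HasColimitsOfSize.{v, v} C ∧
    ∃ κ : Cardinal.{v}, κ.IsRegular ∧
      ∃ (ι : Type v) (G : ι → C),
        (∀ i, IsCardinalPresentableObj (G i) κ) ∧
        ∀ X : C, ∃ (J : Cat.{v, v}) (D : J ⥤ C) (cc : Cocone D),
          IsCardinalFilteredCat J κ ∧ (∀ j : J, D.obj j ∈ Set.range G) ∧
          Nonempty (IsColimit cc) ∧ Nonempty (cc.pt ≅ X)

/-! Enlarge both cardinals to `λ = max κ κ₀`, where `C` is locally `κ₀`-presentable. A locally
`κ₀`-presentable category is locally `λ`-presentable (its `κ₀`-presentable generators form a strong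
generator of `λ`-presentable objects), and the inclusion `i` stays `λ`-accessible. The reflector `L`
then sends `λ`-presentable objects to `λ`-presentable ones, since `Hom(L X, -) ≅ Hom(X, i -)`, and
every `Y ≅ L (i Y)` in `D` is the image under the cocontinuous `L` of a `λ`-filtered colimit of
generators of `C`. -/

open Cardinal

lemma Cardinal.IsRegular.max {κ κ' : Cardinal} (hκ : κ.IsRegular) (hκ' : κ'.IsRegular) :
    (max κ κ').IsRegular := by
  rcases max_choice κ κ' with h | h <;> rw [h] <;> assumption

lemma isCardinalSmallCat_iff_hasCardinalLT_arrow (A : Type v) [SmallCategory A]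
    (κ : Cardinal.{v}) : IsCardinalSmallCat A κ ↔ HasCardinalLT (Arrow A) κ := by
  have hArrow : HasCardinalLT (Arrow A) κ ↔ #(Σ X Y : A, X ⟶ Y) < κ := by
    rw [hasCardinalLT_iff_of_equiv (Arrow.equivSigma A), hasCardinalLT_iff_cardinal_mk_lt]
  rw [hArrow]
  refine ⟨And.right, fun h => ⟨?_, h⟩⟩
  exact (hasCardinalLT_iff_cardinal_mk_lt A κ).1
    (hasCardinalLT_of_hasCardinalLT_arrow (hArrow.2 h))

lemma isCardinalFilteredCat_iff (J : Type v) [SmallCategory J] (κ : Cardinal.{v})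
    [Fact κ.IsRegular] : IsCardinalFilteredCat J κ ↔ IsCardinalFiltered J κ := by
  simp only [IsCardinalFilteredCat, isCardinalSmallCat_iff_hasCardinalLT_arrow]
  exact ⟨fun h => ⟨fun F hA => h _ hA F⟩, fun h A _ hA F => h.nonempty_cocone F hA⟩

lemma isCardinalPresentableObj_iff {C : Type u} [Category.{v} C] (c : C)
    (κ : Cardinal.{v}) [Fact κ.IsRegular] :
    IsCardinalPresentableObj c κ ↔ IsCardinalPresentable c κ := by
  constructor
  · intro h
    exact ⟨fun J _ hJ => ⟨fun {E} => ⟨fun {cc} hcc =>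
      h J ((isCardinalFilteredCat_iff J κ).2 hJ) E cc ⟨hcc⟩⟩⟩⟩
  · intro h J _ hJ E cc ⟨hcc⟩
    have := (isCardinalFilteredCat_iff J κ).1 hJ
    have := preservesColimitsOfShape_of_isCardinalPresentable c κ J
    exact ⟨isColimitOfPreserves _ hcc⟩

lemma CategoryTheory.Functor.isCardinalAccessible_of_preservesColimitsOfShape
    {C : Type u} {D : Type u'} [Category.{v} C] [Category.{v} D] (F : C ⥤ D)
    (κ : Cardinal.{v}) [Fact κ.IsRegular]
    (hF : ∀ (J : Type v) [SmallCategory J], IsCardinalFilteredCat J κ →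
      Nonempty (PreservesColimitsOfShape J F)) :
    F.IsCardinalAccessible κ :=
  ⟨fun J _ hJ => (hF J ((isCardinalFilteredCat_iff J κ).2 hJ)).some⟩

lemma IsLocallyPresentableCat.isLocallyPresentable {C : Type u} [Category.{v} C]
    (hC : IsLocallyPresentableCat C) : IsLocallyPresentable.{v} C := by
  obtain ⟨_, κ, hκ, ι, G, hG, hgen⟩ := hC
  have : Fact κ.IsRegular := ⟨hκ⟩
  have hP : (ObjectProperty.ofObj G).IsCardinalFilteredGenerator κ :=
    { le_isCardinalPresentable := by
        rintro _ ⟨i⟩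
        exact (isCardinalPresentableObj_iff _ κ).1 (hG i)
      exists_colimitsOfShape := fun X => by
        obtain ⟨J, E, cc, hJ, hran, ⟨hcc⟩, ⟨e⟩⟩ := hgen X
        refine ⟨J, inferInstance, (isCardinalFilteredCat_iff J κ).1 hJ,
          ⟨ObjectProperty.ColimitOfShape.ofIso
            { diag := E, ι := cc.ι, isColimit := hcc, prop_diag_obj := fun j => ?_ } e⟩⟩
        obtain ⟨i, hi⟩ := hran j
        rw [← hi]
        exact ⟨i⟩ }
  have := hP.hasCardinalFilteredGenerator
  exact ⟨κ, inferInstance, {}⟩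

lemma isLocallyPresentableCat_of_isCardinalLocallyPresentable (C : Type u) [Category.{v} C]
    (κ : Cardinal.{v}) [hκ : Fact κ.IsRegular] [IsCardinalLocallyPresentable C κ] :
    IsLocallyPresentableCat C := by
  obtain ⟨P, _, hP⟩ := HasCardinalFilteredGenerator.exists_small_generator C κ
  let G : Shrink.{v} (Subtype P) → C := fun s => ((equivShrink _).symm s).1
  refine ⟨inferInstance, κ, hκ.out, _, G, fun s => ?_, fun X => ?_⟩
  · exact (isCardinalPresentableObj_iff _ κ).2
      (hP.le_isCardinalPresentable _ ((equivShrink _).symm s).2)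
  · obtain ⟨J, _, hJ, ⟨p⟩⟩ := hP.exists_colimitsOfShape X
    exact ⟨Cat.of J, p.diag, ⟨X, p.ι⟩, (isCardinalFilteredCat_iff J κ).2 hJ,
      fun j => ⟨equivShrink _ ⟨_, p.prop_diag_obj j⟩, by simp [G]⟩, ⟨p.isColimit⟩, ⟨Iso.refl _⟩⟩

/-- Let `C` be a locally presentable category and `D ⊆ C` a reflective full subcategory
(witnessed by a fully faithful inclusion functor `i : D ⥤ C` with a left adjoint) such
that the inclusion preserves `κ`-filtered colimits for some regular cardinal `κ`.
Then `D` is locally presentable. -/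
theorem isLocallyPresentable_of_reflective {C : Type u} {D : Type u'}
    [Category.{v} C] [Category.{v} D] (hC : IsLocallyPresentableCat C)
    (i : D ⥤ C) [Reflective i] (κ : Cardinal.{v}) (hκ : κ.IsRegular)
    (hpres : ∀ (J : Type v) [SmallCategory J], IsCardinalFilteredCat J κ →
      Nonempty (PreservesColimitsOfShape J i)) :
    IsLocallyPresentableCat D := by
  have := hC.isLocallyPresentable
  obtain ⟨κ₀, hκ₀, _⟩ := IsLocallyPresentable.exists_cardinal.{v} C
  have : Fact κ.IsRegular := ⟨hκ⟩
  have : Fact (max κ κ₀).IsRegular := ⟨hκ.max hκ₀.out⟩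
  have := IsCardinalLocallyPresentable.of_le C (le_max_right κ κ₀)
  have := i.isCardinalAccessible_of_preservesColimitsOfShape κ hpres
  have := i.isCardinalAccessible_of_le (le_max_left κ κ₀)
  have := (reflectorAdjunction i).isCardinalLocallyPresentable (max κ κ₀)
  exact isLocallyPresentableCat_of_isCardinalLocallyPresentable D (max κ κ₀)
end
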